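/- arXiv:solv-int/9508002 — 2 statements merged into one kernel-verified Lean document; each statement's English description precedes it below -/
import Mathlib

section
/- If P is a polynomial of degree d, then Σ_{k=0}^∞ ((a)_k / k!) P(k) t^k = Q(t) (1−t)^{−a−d} for |t| < 1, where Q is a polynomial of degree at most d. -/
/-!
By Newton's forward-difference formula, `P(k) = ∑_{j ≤ d} Δʲ P(0) · C(k, j)`. Since
`(a)_k / k! · C(k, j) = (a)_j / j! · (a + j)_{k-j} / (k - j)!`, multiplying the binomial series by
`C(k, j)` gives `(a)_j / j! · t^j (1 - t)^(-a-j) = (a)_j / j! · t^j (1 - t)^(d-j) · (1 - t)^(-a-d)`,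
and summing over `j ≤ d` produces `Q(t) (1 - t)^(-a-d)` with `deg Q ≤ d`.
-/

open Polynomial Complex Finset fwdDiff
open scoped Nat

theorem Ring.choose_add_sub_one_eq_ascPochhammer_div_factorial {K : Type*} [Field K] [CharZero K]
    (a : K) (n : ℕ) : Ring.choose (a + n - 1) n = (ascPochhammer K n).eval a / n ! := by
  rw [eq_div_iff (by simp [Nat.factorial_ne_zero]), ← nsmul_eq_mul',
    ← Ring.descPochhammer_eq_factorial_smul_choose, descPochhammer_smeval_eq_ascPochhammer,
    ascPochhammer_smeval_cast, ascPochhammer_smeval_eq_eval]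
  ring_nf

theorem ascPochhammer_eval_add_div_factorial_mul_choose {K : Type*} [Field K] [CharZero K]
    (a : K) (j m : ℕ) :
    (ascPochhammer K (j + m)).eval a / (j + m)! * (j + m).choose j =
      (ascPochhammer K j).eval a / j ! * ((ascPochhammer K m).eval (a + j) / m !) := by
  have hfact : ((j + m).choose j * j ! * m ! : K) = (j + m)! := by
    rw [Nat.choose_symm_add]
    exact_mod_cast Nat.add_choose_mul_factorial_mul_factorial j m
  have hchoose : ((j + m).choose j : K) ≠ 0 := by exact_mod_cast (Nat.choose_pos (by omega)).ne'
  rw [← ascPochhammer_mul, eval_mul, eval_comp, eval_add, eval_X, eval_natCast, ← hfact]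
  field_simp

theorem Polynomial.eval_natCast_eq_sum_choose_mul_fwdDiff_iter {R : Type*} [CommRing R]
    (P : R[X]) (k : ℕ) :
    P.eval (k : R) = ∑ j ∈ range (P.natDegree + 1), k.choose j * (Δ_[1])^[j] P.eval 0 := by
  have hvanish : ∀ j, k < j ∨ P.natDegree < j → (k.choose j : R) * (Δ_[1])^[j] P.eval 0 = 0 := by
    rintro j (hkj | hPj)
    · simp [Nat.choose_eq_zero_of_lt hkj]
    · simp [fwdDiff_iter_eq_zero_of_degree_lt hPj]
  have hnewton := shift_eq_sum_fwdDiff_iter 1 P.eval k 0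
  simp only [zero_add, nsmul_eq_mul, mul_one] at hnewton
  calc P.eval (k : R) = ∑ j ∈ range (k + P.natDegree + 1), k.choose j * (Δ_[1])^[j] P.eval 0 := by
        rw [hnewton]
        refine sum_subset (range_subset_range.2 (by omega)) fun j hj hjk ↦ hvanish j ?_
        simp only [mem_range] at hj hjk
        omega
    _ = ∑ j ∈ range (P.natDegree + 1), k.choose j * (Δ_[1])^[j] P.eval 0 := by
        refine (sum_subset (range_subset_range.2 (by omega)) fun j hj hjd ↦ hvanish j ?_).symm
        simp only [mem_range] at hj hjd
        omega

theorem Polynomial.natDegree_one_sub_X_le {R : Type*} [Ring R] : (1 - X : R[X]).natDegree ≤ 1 :=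
  (natDegree_sub_le _ _).trans (max_le (by simp) natDegree_X_le)

namespace Complex

theorem hasSum_ascPochhammer_div_factorial_mul_pow (a : ℂ) {t : ℂ} (ht : ‖t‖ < 1) :
    HasSum (fun k ↦ (ascPochhammer ℂ k).eval a / k ! * t ^ k) ((1 - t) ^ (-a)) := by
  have hmem : t ∈ Metric.eball (0 : ℂ) 1 := by
    rw [Metric.mem_eball, edist_zero_right, ← ofReal_norm]
    exact ENNReal.ofReal_lt_one.mpr ht
  simpa [FormalMultilinearSeries.ofScalars_apply_eq,
    Ring.choose_add_sub_one_eq_ascPochhammer_div_factorial, cpow_neg, mul_comm] using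
    (one_div_one_sub_cpow_hasFPowerSeriesOnBall_zero a).hasSum hmem

theorem hasSum_ascPochhammer_div_factorial_mul_choose_mul_pow (a : ℂ) (j : ℕ) {t : ℂ}
    (ht : ‖t‖ < 1) :
    HasSum (fun k ↦ (ascPochhammer ℂ k).eval a / k ! * k.choose j * t ^ k)
      ((ascPochhammer ℂ j).eval a / j ! * t ^ j * (1 - t) ^ (-a - j)) := by
  have hvanish : ∀ k ∉ Set.range (j + ·),
      (ascPochhammer ℂ k).eval a / k ! * k.choose j * t ^ k = 0 := by
    intro k hk
    have hkj : k < j := by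
      by_contra! h
      exact hk ⟨k - j, Nat.add_sub_cancel' h⟩
    simp [Nat.choose_eq_zero_of_lt hkj]
  have hshifted : (fun k ↦ (ascPochhammer ℂ k).eval a / k ! * k.choose j * t ^ k) ∘ (j + ·) =
      fun m ↦ (ascPochhammer ℂ j).eval a / j ! * t ^ j *
        ((ascPochhammer ℂ m).eval (a + j) / m ! * t ^ m) := by
    funext m
    rw [Function.comp_apply, ascPochhammer_eval_add_div_factorial_mul_choose, pow_add]
    ring
  rw [← (add_right_injective j).hasSum_iff hvanish, hshifted, ← neg_add']
  exact (hasSum_ascPochhammer_div_factorial_mul_pow (a + j) ht).mul_left _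

theorem hasSum_ascPochhammer_div_factorial_mul_eval_mul_pow (a : ℂ) (P : ℂ[X]) {t : ℂ}
    (ht : ‖t‖ < 1) :
    HasSum (fun k ↦ (ascPochhammer ℂ k).eval a / k ! * P.eval (k : ℂ) * t ^ k)
      (∑ j ∈ range (P.natDegree + 1), (Δ_[1])^[j] P.eval 0 *
        ((ascPochhammer ℂ j).eval a / j ! * t ^ j * (1 - t) ^ (-a - j))) := by
  simp_rw [P.eval_natCast_eq_sum_choose_mul_fwdDiff_iter, mul_sum, sum_mul]
  refine hasSum_sum fun j _ ↦ ?_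
  exact ((hasSum_ascPochhammer_div_factorial_mul_choose_mul_pow a j ht).mul_left
    ((Δ_[1])^[j] P.eval 0)).congr_fun fun k ↦ by ring

end Complex

/-- If `P` is a polynomial of degree `d`, then
`∑_{k≥0} ((a)_k / k!) P(k) t^k = Q(t) (1-t)^(-a-d)` for `|t| < 1`,
where `Q` is a polynomial of degree at most `d`. -/
theorem binomial_series_times_polynomial (a : ℂ) (d : ℕ)
    (P : Polynomial ℂ) (hP : P.natDegree = d) :
    ∃ Q : Polynomial ℂ, Q.natDegree ≤ d ∧
      ∀ t : ℂ, ‖t‖ < 1 →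
        (∑' k : ℕ, ((ascPochhammer ℂ k).eval a / (Nat.factorial k)) *
            P.eval (k : ℂ) * t ^ k)
        = Q.eval t * (1 - t) ^ (-a - (d : ℂ)) := by
  subst hP
  set c : ℕ → ℂ := fun j ↦ (Δ_[1])^[j] P.eval 0 * ((ascPochhammer ℂ j).eval a / j !)
  refine ⟨∑ j ∈ range (P.natDegree + 1), C (c j) * X ^ j * (1 - X) ^ (P.natDegree - j),
    natDegree_sum_le_of_forall_le _ _ fun j hj ↦ ?_, fun t ht ↦ ?_⟩
  · calc _ ≤ j + (P.natDegree - j) :=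
          natDegree_mul_le_of_le ((natDegree_C_mul_le _ _).trans (natDegree_X_pow_le j))
            ((natDegree_pow_le_of_le _ natDegree_one_sub_X_le).trans (mul_one _).le)
      _ = P.natDegree := by grind
  have h1t : 1 - t ≠ 0 := sub_ne_zero.2 fun h ↦ by simp [← h] at ht
  rw [(hasSum_ascPochhammer_div_factorial_mul_eval_mul_pow a P ht).tsum_eq, eval_finsetSum,
    sum_mul]
  refine sum_congr rfl fun j hj ↦ ?_
  have hsplit : (1 - t) ^ P.natDegree = (1 - t) ^ (P.natDegree - j) * (1 - t) ^ j := by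
    rw [← pow_add, Nat.sub_add_cancel (by grind)]
  have hpow : (1 - t) ^ (-a - j) = (1 - t) ^ (P.natDegree - j) * (1 - t) ^ (-a - P.natDegree) := by
    rw [cpow_sub _ _ h1t, cpow_sub _ _ h1t, cpow_natCast, cpow_natCast, hsplit]
    field_simp
  simp only [eval_mul, eval_C, eval_pow, eval_X, eval_sub, eval_one, hpow, c]
  ring
end

section
/- Uniqueness of the polynomial solution in the A₁ case: if g is not an integer and n₁ ≤ n₂ are integers, then any two Laurent-polynomial solutions of the hypergeometric-type ODE t(1−t)f'' + (c − (a+b+1)t) f' − ab f = 0 with a = n₁−n₂, b = g, c = n₁−n₂+1−g that are polynomials in t are proportional. -/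
/-!
Writing `f = ∑ eₖ tᵏ`, the equation `t(1-t)f'' + (c-(a+b+1)t)f' - abf = 0` is equivalent to the
two-term recurrence `e_{k+1} (k+1)(k+c) = eₖ (k+a)(k+b)`. For `a = n₁-n₂`, `b = g`,
`c = n₁-n₂+1-g` with `g ∉ ℤ` and `n₁ ≤ n₂`, the factor `(k+1)(k+c)` vanishes only at `k = -1` and
`(k+a)(k+b)` does not vanish for `k < 0`. Hence every negative coefficient is zero and the
nonnegative ones are determined by `e₀`, so the solution space is at most one-dimensional.
-/

open Finset

section Recurrence

variable {K : Type*} [Field K] {p q e e₁ e₂ : ℤ → K}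

theorem eq_zero_of_nonneg_of_mul_succ_eq (hrec : ∀ k, e (k + 1) * p k = e k * q k)
    (hp : ∀ k, 0 ≤ k → p k ≠ 0) (h0 : e 0 = 0) : ∀ k, 0 ≤ k → e k = 0 := by
  refine Int.leInduction h0 fun k hk ih => ?_
  have := hrec k
  rw [ih, zero_mul] at this
  exact (mul_eq_zero.mp this).resolve_right (hp k hk)

theorem eq_zero_of_neg_of_mul_succ_eq (hrec : ∀ k, e (k + 1) * p k = e k * q k)
    (hp : p (-1) = 0) (hq : ∀ k < 0, q k ≠ 0) : ∀ k ≤ -1, e k = 0 := by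
  have base : e (-1) = 0 := by
    have := hrec (-1)
    rw [hp, mul_zero] at this
    exact (mul_eq_zero.mp this.symm).resolve_right (hq _ (by norm_num))
  refine Int.leInductionDown base fun k hk ih => ?_
  have := hrec (k - 1)
  rw [sub_add_cancel, ih, zero_mul] at this
  exact (mul_eq_zero.mp this.symm).resolve_right (hq _ (by omega))

theorem eq_zero_of_mul_succ_eq (hrec : ∀ k, e (k + 1) * p k = e k * q k)
    (hp₀ : p (-1) = 0) (hp : ∀ k, 0 ≤ k → p k ≠ 0) (hq : ∀ k < 0, q k ≠ 0) (h0 : e 0 = 0) :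
    e = 0 := by
  ext k
  rcases lt_or_ge k 0 with hk | hk
  · exact eq_zero_of_neg_of_mul_succ_eq hrec hp₀ hq k (by omega)
  · exact eq_zero_of_nonneg_of_mul_succ_eq hrec hp h0 k hk

theorem exists_smul_eq_smul_of_mul_succ_eq (hrec₁ : ∀ k, e₁ (k + 1) * p k = e₁ k * q k)
    (hrec₂ : ∀ k, e₂ (k + 1) * p k = e₂ k * q k)
    (hp₀ : p (-1) = 0) (hp : ∀ k, 0 ≤ k → p k ≠ 0) (hq : ∀ k < 0, q k ≠ 0) :
    ∃ μ ν : K, (μ, ν) ≠ (0, 0) ∧ μ • e₁ = ν • e₂ := by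
  by_cases h₁ : e₁ 0 = 0
  · exact ⟨1, 0, by simp, by simp [eq_zero_of_mul_succ_eq hrec₁ hp₀ hp hq h₁]⟩
  have hrec : ∀ k, (e₂ 0 • e₁ - e₁ 0 • e₂) (k + 1) * p k = (e₂ 0 • e₁ - e₁ 0 • e₂) k * q k :=
    fun k => by
      simp only [Pi.sub_apply, Pi.smul_apply, smul_eq_mul]
      linear_combination e₂ 0 * hrec₁ k - e₁ 0 * hrec₂ k
  refine ⟨e₂ 0, e₁ 0, by simp [h₁], sub_eq_zero.mp (eq_zero_of_mul_succ_eq hrec hp₀ hp hq ?_)⟩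
  simp only [Pi.sub_apply, Pi.smul_apply, smul_eq_mul]
  ring

end Recurrence

theorem eq_zero_of_sum_mul_zpow_eq_zero {K : Type*} [Field K] [Infinite K] {S : Finset ℤ}
    {d : ℤ → K} (hd : ∀ k ∉ S, d k = 0) (h : ∀ t : K, t ≠ 0 → ∑ k ∈ S, d k * t ^ k = 0) :
    d = 0 := by
  obtain ⟨N, hN⟩ : ∃ N : ℤ, ∀ k ∈ S, 0 ≤ k + N := by
    obtain ⟨m, hm⟩ := S.bddBelow
    exact ⟨-m, fun k hk => by linarith [hm hk]⟩
  set P : Polynomial K := ∑ k ∈ S, Polynomial.monomial (k + N).toNat (d k)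
  have hP : P = 0 := by
    refine P.eq_zero_of_infinite_isRoot (Set.Infinite.mono (fun t (ht : t ≠ 0) => ?_)
      (Set.finite_singleton 0).infinite_compl)
    have : P.eval t = t ^ N * ∑ k ∈ S, d k * t ^ k := by
      simp only [P, Polynomial.eval_finsetSum, Polynomial.eval_monomial, mul_sum]
      refine sum_congr rfl fun k hk => ?_
      rw [← zpow_natCast, Int.toNat_of_nonneg (hN k hk), zpow_add₀ ht]
      ring
    simp [Polynomial.IsRoot, this, h t ht]
  ext k
  by_cases hk : k ∈ S
  · have : P.coeff (k + N).toNat = d k := by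
      simp only [P, Polynomial.finsetSum_coeff, Polynomial.coeff_monomial]
      refine (sum_eq_single k (fun j hj hjk => if_neg fun hjk' => hjk ?_) (absurd hk)).trans
        (by simp)
      have := hN j hj
      have := hN k hk
      omega
    simpa [hP] using this.symm
  · exact hd k hk

theorem sum_indicator_add_one_mul {α M : Type*} [Zero α] [AddCommMonoid M] {s S : Finset ℤ}
    (hs : ∀ k ∈ s, k - 1 ∈ S) (e : ℤ → α) (g : ℤ → α → M) (hg : ∀ k, g k 0 = 0) :
    ∑ k ∈ S, g k ((s : Set ℤ).indicator e (k + 1)) = ∑ k ∈ s, g (k - 1) (e k) := by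
  have hsub : s ⊆ S.map (addRightEmbedding 1) := fun k hk =>
    mem_map.mpr ⟨k - 1, hs k hk, by simp⟩
  rw [← sum_indicator_subset_of_eq_zero e (fun k => g (k - 1)) hsub (fun k => hg _), sum_map]
  simp

section Hypergeometric

variable {𝕜 : Type*} [NontriviallyNormedField 𝕜]

theorem hasDerivAt_sum_mul_zpow {ι : Type*} (s : Finset ι) (e : ι → 𝕜) (n : ι → ℤ) {t : 𝕜}
    (ht : t ≠ 0) :
    HasDerivAt (fun x => ∑ i ∈ s, e i * x ^ n i) (∑ i ∈ s, e i * (n i * t ^ (n i - 1))) t :=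
  HasDerivAt.fun_sum fun i _ => (hasDerivAt_zpow (n i) t (Or.inl ht)).const_mul (e i)

noncomputable def hypergeometricOp (a b c : 𝕜) (f : 𝕜 → 𝕜) (t : 𝕜) : 𝕜 :=
  t * (1 - t) * deriv (deriv f) t + (c - (a + b + 1) * t) * deriv f t - a * b * f t

theorem hypergeometricOp_sum_mul_zpow (a b c : 𝕜) (s : Finset ℤ) (e : ℤ → 𝕜) {t : 𝕜}
    (ht : t ≠ 0) :
    hypergeometricOp a b c (fun x => ∑ k ∈ s, e k * x ^ k) t
      = ∑ k ∈ s, (e k * (k * (k - 1 + c)) * t ^ (k - 1) - e k * ((k + a) * (k + b)) * t ^ k) := by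
  have hd : ∀ x : 𝕜, x ≠ 0 →
      deriv (fun x => ∑ k ∈ s, e k * x ^ k) x = ∑ k ∈ s, e k * k * x ^ (k - 1) := fun x hx => by
    simpa [mul_assoc] using (hasDerivAt_sum_mul_zpow s e id hx).deriv
  have hdd : deriv (deriv fun x => ∑ k ∈ s, e k * x ^ k) t
      = ∑ k ∈ s, e k * k * ((k - 1 : ℤ) * t ^ (k - 1 - 1)) := by
    rw [Filter.EventuallyEq.deriv_eq (Filter.eventually_of_mem (isOpen_ne.mem_nhds ht) hd)]
    exact (hasDerivAt_sum_mul_zpow s (fun k => e k * k) (· - 1) ht).deriv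
  rw [hypergeometricOp, hdd, hd t ht, mul_sum, mul_sum, mul_sum, ← sum_add_distrib,
    ← sum_sub_distrib]
  refine sum_congr rfl fun k _ => ?_
  have h₁ : t ^ (k - 1) = t ^ (k - 1 - 1) * t := by rw [← zpow_add_one₀ ht, sub_add_cancel]
  have h₀ : t ^ k = t ^ (k - 1 - 1) * t * t := by rw [← h₁, ← zpow_add_one₀ ht, sub_add_cancel]
  rw [h₀, h₁]
  push_cast
  ring

theorem hypergeometricOp_coeff_recurrence {a b c : 𝕜} {s : Finset ℤ} {e : ℤ → 𝕜}
    (hode : ∀ t : 𝕜, t ≠ 0 → hypergeometricOp a b c (fun x => ∑ k ∈ s, e k * x ^ k) t = 0)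
    (k : ℤ) :
    (s : Set ℤ).indicator e (k + 1) * ((k + 1) * (k + c))
      = (s : Set ℤ).indicator e k * ((k + a) * (k + b)) := by
  set E := (s : Set ℤ).indicator e
  set S := s ∪ s.map (addRightEmbedding (-1))
  suffices h : (fun k : ℤ => E (k + 1) * ((k + 1) * (k + c)) - E k * ((k + a) * (k + b))) = 0 from
    sub_eq_zero.mp (congrFun h k)
  refine eq_zero_of_sum_mul_zpow_eq_zero (S := S) (fun j hj => ?_) fun t ht => ?_
  · have hj₀ : j ∉ s := fun h => hj (mem_union_left _ h)
    have hj₁ : j + 1 ∉ s := fun h => hj (mem_union_right _ (mem_map.mpr ⟨j + 1, h, by simp⟩))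
    simp [E, hj₀, hj₁]
  · have hshift : ∀ k ∈ s, k - 1 ∈ S := fun k hk =>
      mem_union_right _ (mem_map.mpr ⟨k, hk, by simp [sub_eq_add_neg]⟩)
    simp only [sub_mul, sum_sub_distrib]
    rw [sum_indicator_add_one_mul hshift e (fun k x => x * ((k + 1) * (k + c)) * t ^ k) (by simp),
      sum_indicator_subset_of_eq_zero e (fun k x => x * ((k + a) * (k + b)) * t ^ k)
        subset_union_left (by simp), ← sum_sub_distrib, ← hode t ht,
      hypergeometricOp_sum_mul_zpow a b c s e ht]
    refine sum_congr rfl fun k _ => ?_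
    push_cast
    ring

end Hypergeometric

/-- Uniqueness of the Laurent-polynomial solution in the `A₁` case: if `g` is not
an integer and `n₁ ≤ n₂`, then any two Laurent-polynomial solutions of
`t(1-t) f'' + (c - (a+b+1)t) f' - ab f = 0` with `a = n₁-n₂`, `b = g`,
`c = n₁-n₂+1-g` are proportional. -/
theorem a1_uniqueness (n₁ n₂ : ℤ) (hn : n₁ ≤ n₂) (g : ℂ)
    (hg : ∀ m : ℤ, g ≠ (m : ℂ))
    (s : Finset ℤ) (c₁ c₂ : ℤ → ℂ)
    (f₁ f₂ : ℂ → ℂ)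
    (hf₁ : f₁ = fun t : ℂ => ∑ k ∈ s, c₁ k * t ^ k)
    (hf₂ : f₂ = fun t : ℂ => ∑ k ∈ s, c₂ k * t ^ k)
    (hode₁ : ∀ t : ℂ, t ≠ 0 →
      t * (1 - t) * deriv (deriv f₁) t
        + (((n₁ : ℂ) - n₂ + 1 - g) - (((n₁ : ℂ) - n₂) + g + 1) * t) * deriv f₁ t
        - ((n₁ : ℂ) - n₂) * g * f₁ t = 0)
    (hode₂ : ∀ t : ℂ, t ≠ 0 →
      t * (1 - t) * deriv (deriv f₂) t
        + (((n₁ : ℂ) - n₂ + 1 - g) - (((n₁ : ℂ) - n₂) + g + 1) * t) * deriv f₂ t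
        - ((n₁ : ℂ) - n₂) * g * f₂ t = 0) :
    ∃ μ ν : ℂ, (μ, ν) ≠ (0, 0) ∧ ∀ t : ℂ, t ≠ 0 → μ * f₁ t = ν * f₂ t := by
  subst hf₁ hf₂
  have hp : ∀ k : ℤ, 0 ≤ k → ((k : ℂ) + 1) * (k + ((n₁ : ℂ) - n₂ + 1 - g)) ≠ 0 := fun k hk =>
    mul_ne_zero (by norm_cast; omega) fun h =>
      hg (k + n₁ - n₂ + 1) (by push_cast; linear_combination -h)
  have hq : ∀ k : ℤ, k < 0 → ((k : ℂ) + ((n₁ : ℂ) - n₂)) * (k + g) ≠ 0 := fun k hk =>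
    mul_ne_zero (by norm_cast; omega) fun h => hg (-k) (by push_cast; linear_combination h)
  obtain ⟨μ, ν, hμν, h⟩ := exists_smul_eq_smul_of_mul_succ_eq
    (hypergeometricOp_coeff_recurrence hode₁) (hypergeometricOp_coeff_recurrence hode₂)
    (by simp) hp hq
  have hcoeff : ∀ k ∈ s, μ * c₁ k = ν * c₂ k := fun k hk => by
    simpa [Set.indicator_of_mem (mem_coe.mpr hk)] using congrFun h k
  refine ⟨μ, ν, hμν, fun t _ => ?_⟩
  simp only [mul_sum, ← mul_assoc]
  exact sum_congr rfl fun k hk => by rw [hcoeff k hk]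
end
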